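/- Let y_1, y_2, e_1, e_2 ∈ ℝ^T with y_1 ≠ 0 and y_2 ≠ 0, let θ = cos(y_1, y_2) > 0, and let 0 < ε < 1/2 satisfy ‖e_1‖₂ ≤ ε ‖y_1‖₂ and ‖e_2‖₂ ≤ ε ‖y_2‖₂. Then θ − 35ε ≤ cos(y_1 + e_1, y_2 + e_2) ≤ θ + 35ε. -/

import Mathlib

open Matrix BigOperators

noncomputable section

/-- The `T × T` shift matrix `S_τ` with ones on the `τ`-th upper diagonal. -/
def shiftMat (T τ : ℕ) : Matrix (Fin T) (Fin T) ℝ :=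
  Matrix.of fun i j => if (j : ℕ) = (i : ℕ) + τ then 1 else 0

/-- Right shift with zero padding: `(S_τᵀ x)_j = x_{j-τ}`. -/
def shift {T : ℕ} (τ : ℕ) (x : Fin T → ℝ) : Fin T → ℝ :=
  (shiftMat T τ)ᵀ.mulVec x

/-- Euclidean dot product. -/
def dot {T : ℕ} (u v : Fin T → ℝ) : ℝ := ∑ i, u i * v i

/-- Euclidean norm. -/
def enorm {T : ℕ} (u : Fin T → ℝ) : ℝ := Real.sqrt (∑ i, u i ^ 2)

open Classical in
/-- Cosine of the angle between two vectors, with the convention that it is `0`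
if either vector is zero. -/
def vcos {T : ℕ} (u v : Fin T → ℝ) : ℝ :=
  if u = 0 ∨ v = 0 then 0 else dot u v / (_root_.enorm u * _root_.enorm v)

/-- The `L`-shift cosine similarity `cos_L`. -/
def cosL {T : ℕ} (L : ℕ) (u v : Fin T → ℝ) : ℝ :=
  ⨆ ℓ : Fin L, max (vcos (shift (ℓ : ℕ) u) v) (vcos u (shift (ℓ : ℕ) v))


/-! Write cos(u, v) = ⟪u, v⟫ / (‖u‖ ‖v‖). Under the perturbation both the numerator and the
denominator move by at most (2ε + ε²)‖y₁‖‖y₂‖ (Cauchy–Schwarz, resp. the triangle inequality),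
while the new denominator stays at least (1 - ε)²‖y₁‖‖y₂‖. As |cos(y₁, y₂)| ≤ 1, the cosine moves
by at most 2(2ε + ε²)/(1 - ε)², which is at most 20ε for ε < 1/2. -/

open InnerProductGeometry
open scoped RealInnerProductSpace

theorem abs_add_mul_add_sub_mul_le (a b s t : ℝ) :
    |(a + s) * (b + t) - a * b| ≤ |a| * |t| + |s| * |b| + |s| * |t| := by
  calc |(a + s) * (b + t) - a * b| = |a * t + s * b + s * t| := by ring_nf
    _ ≤ |a * t| + |s * b| + |s * t| := abs_add_three _ _ _
    _ = |a| * |t| + |s| * |b| + |s| * |t| := by simp only [abs_mul]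

theorem abs_div_sub_div_le_of_abs_sub_le {D D' n M η : ℝ} (hn : 0 < n) (hM : 0 < M)
    (hD : |D| ≤ n) (hD' : |D' - D| ≤ η) (hM' : |M - n| ≤ η) :
    |D' / M - D / n| ≤ 2 * η / M := by
  have hDn : |D / n| ≤ 1 := by rwa [abs_div, abs_of_pos hn, div_le_one hn]
  have hsplit : D' / M - D / n = ((D' - D) + D / n * (n - M)) / M := by
    field_simp; ring
  rw [hsplit, abs_div, abs_of_pos hM]
  gcongr
  calc |(D' - D) + D / n * (n - M)| ≤ |D' - D| + |D / n| * |n - M| := by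
        simpa only [abs_mul] using abs_add_le (D' - D) (D / n * (n - M))
    _ ≤ η + 1 * η := by rw [abs_sub_comm n M]; gcongr
    _ = 2 * η := by ring

theorem two_mul_div_one_sub_sq_le {ε : ℝ} (hε0 : 0 ≤ ε) (hε : ε < 1 / 2) :
    2 * (2 * ε + ε ^ 2) / (1 - ε) ^ 2 ≤ 20 * ε := by
  rw [div_le_iff₀ (by nlinarith)]
  nlinarith [mul_nonneg (mul_nonneg hε0 (by linarith : (0 : ℝ) ≤ 1 / 2 - ε))
    (by linarith : (0 : ℝ) ≤ 32 - 20 * ε)]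

section SeminormedAddCommGroup

variable {E : Type*} [SeminormedAddCommGroup E]

theorem one_sub_mul_norm_le_norm_add {x e : E} {ε : ℝ} (he : ‖e‖ ≤ ε * ‖x‖) :
    (1 - ε) * ‖x‖ ≤ ‖x + e‖ := by
  linarith [norm_sub_le_norm_add x e]

theorem abs_norm_mul_norm_add_add_sub_le (x y e f : E) :
    |‖x + e‖ * ‖y + f‖ - ‖x‖ * ‖y‖| ≤ ‖x‖ * ‖f‖ + ‖e‖ * ‖y‖ + ‖e‖ * ‖f‖ := by
  have hs : |‖x + e‖ - ‖x‖| ≤ ‖e‖ := by simpa using abs_norm_sub_norm_le (x + e) x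
  have ht : |‖y + f‖ - ‖y‖| ≤ ‖f‖ := by simpa using abs_norm_sub_norm_le (y + f) y
  calc |‖x + e‖ * ‖y + f‖ - ‖x‖ * ‖y‖|
      = |(‖x‖ + (‖x + e‖ - ‖x‖)) * (‖y‖ + (‖y + f‖ - ‖y‖)) - ‖x‖ * ‖y‖| := by ring_nf
    _ ≤ |‖x‖| * |‖y + f‖ - ‖y‖| + |‖x + e‖ - ‖x‖| * |‖y‖|
          + |‖x + e‖ - ‖x‖| * |‖y + f‖ - ‖y‖| := abs_add_mul_add_sub_mul_le _ _ _ _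
    _ ≤ ‖x‖ * ‖f‖ + ‖e‖ * ‖y‖ + ‖e‖ * ‖f‖ := by
        simp only [abs_norm]; gcongr

end SeminormedAddCommGroup

section InnerProductSpace

variable {E : Type*} [NormedAddCommGroup E] [InnerProductSpace ℝ E]

theorem abs_inner_add_add_sub_inner_le (x y e f : E) :
    |⟪x + e, y + f⟫ - ⟪x, y⟫| ≤ ‖x‖ * ‖f‖ + ‖e‖ * ‖y‖ + ‖e‖ * ‖f‖ := by
  calc |⟪x + e, y + f⟫ - ⟪x, y⟫| = |⟪x, f⟫ + ⟪e, y⟫ + ⟪e, f⟫| := by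
        simp only [inner_add_left, inner_add_right]; ring_nf
    _ ≤ |⟪x, f⟫| + |⟪e, y⟫| + |⟪e, f⟫| := abs_add_three _ _ _
    _ ≤ ‖x‖ * ‖f‖ + ‖e‖ * ‖y‖ + ‖e‖ * ‖f‖ := by
        gcongr <;> exact abs_real_inner_le_norm _ _

theorem abs_cos_angle_add_add_sub_cos_angle_le {x y e f : E} {ε : ℝ} (hx : x ≠ 0) (hy : y ≠ 0)
    (he : ‖e‖ ≤ ε * ‖x‖) (hf : ‖f‖ ≤ ε * ‖y‖) (hε : ε < 1) :
    |Real.cos (angle (x + e) (y + f)) - Real.cos (angle x y)| ≤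
      2 * (2 * ε + ε ^ 2) / (1 - ε) ^ 2 := by
  have hx0 : 0 < ‖x‖ := norm_pos_iff.mpr hx
  have hy0 : 0 < ‖y‖ := norm_pos_iff.mpr hy
  have hn : 0 < ‖x‖ * ‖y‖ := mul_pos hx0 hy0
  have hε0 : 0 ≤ ε := nonneg_of_mul_nonneg_left ((norm_nonneg e).trans he) hx0
  have hM : (1 - ε) ^ 2 * (‖x‖ * ‖y‖) ≤ ‖x + e‖ * ‖y + f‖ := by
    calc (1 - ε) ^ 2 * (‖x‖ * ‖y‖) = ((1 - ε) * ‖x‖) * ((1 - ε) * ‖y‖) := by ring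
      _ ≤ ‖x + e‖ * ‖y + f‖ :=
        mul_le_mul (one_sub_mul_norm_le_norm_add he) (one_sub_mul_norm_le_norm_add hf)
          (by nlinarith) (norm_nonneg _)
  have hM0 : 0 < (1 - ε) ^ 2 * (‖x‖ * ‖y‖) := by
    have : 0 < 1 - ε := by linarith
    positivity
  have hη : ‖x‖ * ‖f‖ + ‖e‖ * ‖y‖ + ‖e‖ * ‖f‖ ≤ (2 * ε + ε ^ 2) * (‖x‖ * ‖y‖) := by
    have hef : ‖e‖ * ‖f‖ ≤ (ε * ‖x‖) * (ε * ‖y‖) :=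
      mul_le_mul he hf (norm_nonneg f) (le_trans (norm_nonneg e) he)
    nlinarith
  rw [cos_angle, cos_angle]
  calc _ ≤ 2 * ((2 * ε + ε ^ 2) * (‖x‖ * ‖y‖)) / (‖x + e‖ * ‖y + f‖) :=
        abs_div_sub_div_le_of_abs_sub_le hn (hM0.trans_le hM) (abs_real_inner_le_norm x y)
          ((abs_inner_add_add_sub_inner_le x y e f).trans hη)
          ((abs_norm_mul_norm_add_add_sub_le x y e f).trans hη)
    _ ≤ 2 * ((2 * ε + ε ^ 2) * (‖x‖ * ‖y‖)) / ((1 - ε) ^ 2 * (‖x‖ * ‖y‖)) := by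
        gcongr
    _ = 2 * (2 * ε + ε ^ 2) / (1 - ε) ^ 2 := by
        rw [← mul_assoc, mul_div_mul_right _ _ hn.ne']

theorem abs_cos_angle_add_add_sub_cos_angle_le_of_lt_half {x y e f : E} {ε : ℝ} (hx : x ≠ 0)
    (hy : y ≠ 0) (he : ‖e‖ ≤ ε * ‖x‖) (hf : ‖f‖ ≤ ε * ‖y‖) (hε : ε < 1 / 2) :
    |Real.cos (angle (x + e) (y + f)) - Real.cos (angle x y)| ≤ 20 * ε :=
  (abs_cos_angle_add_add_sub_cos_angle_le hx hy he hf (by linarith)).trans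
    (two_mul_div_one_sub_sq_le
      (nonneg_of_mul_nonneg_left ((norm_nonneg e).trans he) (norm_pos_iff.mpr hx)) hε)

end InnerProductSpace

theorem enorm_eq_norm_toLp {T : ℕ} (u : Fin T → ℝ) :
    _root_.enorm u = ‖WithLp.toLp 2 u‖ := by
  simp [_root_.enorm, EuclideanSpace.norm_eq, sq_abs]

/-- `angle` is `π / 2` as soon as one vector is zero, which matches the convention of `vcos`. -/
theorem vcos_eq_cos_angle {T : ℕ} (u v : Fin T → ℝ) :
    vcos u v = Real.cos (angle (WithLp.toLp 2 u) (WithLp.toLp 2 v)) := by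
  rw [cos_angle, ← enorm_eq_norm_toLp, ← enorm_eq_norm_toLp, EuclideanSpace.inner_toLp_toLp, vcos]
  split_ifs with h
  · rcases h with rfl | rfl <;> simp
  · simp [dot, dotProduct, mul_comm]

theorem cos_perturbation_linear_general (T : ℕ) (y₁ y₂ e₁ e₂ : Fin T → ℝ)
    (hy₁ : y₁ ≠ 0) (hy₂ : y₂ ≠ 0) (θ ε : ℝ)
    (hθdef : θ = vcos y₁ y₂) (hε1 : ε < 1 / 2)
    (he₁ : _root_.enorm e₁ ≤ ε * _root_.enorm y₁) (he₂ : _root_.enorm e₂ ≤ ε * _root_.enorm y₂) :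
    θ - 35 * ε ≤ vcos (y₁ + e₁) (y₂ + e₂) ∧
      vcos (y₁ + e₁) (y₂ + e₂) ≤ θ + 35 * ε := by
  rw [enorm_eq_norm_toLp, enorm_eq_norm_toLp] at he₁ he₂
  have hbound := abs_cos_angle_add_add_sub_cos_angle_le_of_lt_half
    (by simpa using hy₁) (by simpa using hy₂) he₁ he₂ hε1
  have hε0 : 0 ≤ ε := by linarith [(abs_nonneg _).trans hbound]
  rw [← WithLp.toLp_add, ← WithLp.toLp_add, ← vcos_eq_cos_angle, ← vcos_eq_cos_angle, ← hθdef]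
    at hbound
  constructor <;> linarith [abs_le.mp hbound]

/-- Corollary: linear cosine perturbation: if `θ = cos(y₁,y₂) > 0` and the
perturbations are relatively bounded by `ε < 1/2`, then
`θ - 35ε ≤ cos(y₁+e₁, y₂+e₂) ≤ θ + 35ε`. -/
theorem cos_perturbation_linear (T : ℕ) (y₁ y₂ e₁ e₂ : Fin T → ℝ)
    (hy₁ : y₁ ≠ 0) (hy₂ : y₂ ≠ 0) (θ ε : ℝ)
    (hθdef : θ = vcos y₁ y₂) (hθ : 0 < θ) (hε0 : 0 < ε) (hε1 : ε < 1 / 2)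
    (he₁ : _root_.enorm e₁ ≤ ε * _root_.enorm y₁) (he₂ : _root_.enorm e₂ ≤ ε * _root_.enorm y₂) :
    θ - 35 * ε ≤ vcos (y₁ + e₁) (y₂ + e₂) ∧
      vcos (y₁ + e₁) (y₂ + e₂) ≤ θ + 35 * ε :=
  cos_perturbation_linear_general T y₁ y₂ e₁ e₂ hy₁ hy₂ θ ε hθdef hε1 he₁ he₂

end
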